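/- For the two-valued random variable X_ε with P(X_ε = 0) = 1-ε and P(X_ε = m/ε) = ε (where m > 0 and 0 < ε < 1), which has mean m, one has T(X_ε) = 1 - ε; consequently sup over probability measures on [0,∞) with positive mean of T equals 1 and is not attained. -/

import Mathlib

open MeasureTheory Complex

/-- Fourier transform `f̂(ξ) = ∫ e^{-iξx} dF(x)` of a measure on `ℝ`. -/
noncomputable def ft (μ : Measure ℝ) (ξ : ℝ) : ℂ :=
  ∫ x, Complex.exp (-(Complex.I * ξ * x)) ∂μ

/-- Derivative of the Fourier transform: `f̂'(ξ) = -i ∫ x e^{-iξx} dF(x)`. -/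
noncomputable def ft' (μ : Measure ℝ) (ξ : ℝ) : ℂ :=
  ∫ x, -(Complex.I * x) * Complex.exp (-(Complex.I * ξ * x)) ∂μ

/-- The Fourier-based inequality index `T(F) = (1/2) sup_ξ |f̂(ξ) - f̂'(ξ)/f̂'(0)|`. -/
noncomputable def Tindex (μ : Measure ℝ) : ℝ :=
  (1 / 2) * ⨆ ξ : ℝ, ‖ft μ ξ - ft' μ ξ / ft' μ 0‖

/-!
For a law `μ` on `[0, ∞)` with mean `M > 0`, `f̂(ξ) - f̂'(ξ)/f̂'(0) = ∫ (1 - x/M) e^{-iξx} dμ`, so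
`2 T(μ) ≤ ∫ |1 - x/M| dμ`. For `y ≥ 0` one has `|1 - y| ≤ 1 + y` with equality only at `y = 0`, and
`∫ (1 + x/M) dμ = 2`; since `μ` is not concentrated at `0`, the inequality is strict and `T(μ) < 1`.
The two-point laws `(1-ε) δ₀ + ε δ_{m/ε}` have `f̂ - f̂'/f̂'(0) = (1-ε)(1 - e^{-i(m/ε)ξ})`, hence
`T = 1 - ε`, which approaches `1` as `ε → 0`.
-/

lemma norm_exp_neg_I_mul_mul (ξ x : ℝ) : ‖exp (-(I * ξ * x))‖ = 1 := by
  simp [norm_exp]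

section FourierIndex

variable {μ : Measure ℝ}

lemma integrable_exp_neg_I_mul_mul [IsFiniteMeasure μ] (ξ : ℝ) :
    Integrable (fun x : ℝ => exp (-(I * ξ * x))) μ :=
  (integrable_const (1 : ℝ)).mono' (by fun_prop)
    (.of_forall fun x => (norm_exp_neg_I_mul_mul ξ x).le)

lemma integrable_mul_exp_neg_I_mul_mul (hint : Integrable (fun x : ℝ => x) μ) (ξ : ℝ) :
    Integrable (fun x : ℝ => (x : ℂ) * exp (-(I * ξ * x))) μ :=
  hint.norm.mono' (by fun_prop) (.of_forall fun x => by
    rw [norm_mul, norm_exp_neg_I_mul_mul, mul_one, norm_real])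

lemma ft'_zero (μ : Measure ℝ) : ft' μ 0 = -I * ((∫ x, x ∂μ : ℝ) : ℂ) := by
  simp only [ft', ofReal_zero, mul_zero, zero_mul, neg_zero, exp_zero, mul_one, neg_mul,
    integral_neg, integral_const_mul]
  exact congrArg (fun z => -(I * z)) integral_complex_ofReal

lemma ft_sub_ft'_div_ft'_zero [IsFiniteMeasure μ] (hint : Integrable (fun x : ℝ => x) μ)
    (ξ : ℝ) :
    ft μ ξ - ft' μ ξ / ft' μ 0
      = ∫ x, (1 - (x : ℂ) / ((∫ y, y ∂μ : ℝ) : ℂ)) * exp (-(I * ξ * x)) ∂μ := by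
  have hft' : ft' μ ξ = -I * ∫ x, (x : ℂ) * exp (-(I * ξ * x)) ∂μ := by
    rw [ft', ← integral_const_mul]
    congr 1 with x
    ring
  rw [ft, hft', ft'_zero, mul_div_mul_left _ _ (neg_ne_zero.2 I_ne_zero), ← integral_div,
    ← integral_sub (integrable_exp_neg_I_mul_mul ξ)
      ((integrable_mul_exp_neg_I_mul_mul hint ξ).div_const _)]
  congr 1 with x
  ring

lemma norm_ft_sub_ft'_div_ft'_zero_le [IsFiniteMeasure μ] (hint : Integrable (fun x : ℝ => x) μ)
    (ξ : ℝ) : ‖ft μ ξ - ft' μ ξ / ft' μ 0‖ ≤ ∫ x, |1 - x / ∫ y, y ∂μ| ∂μ := by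
  rw [ft_sub_ft'_div_ft'_zero hint]
  refine (norm_integral_le_integral_norm _).trans_eq (integral_congr_ae (.of_forall fun x => ?_))
  simp only [norm_mul, norm_exp_neg_I_mul_mul, mul_one]
  exact_mod_cast norm_real (1 - x / ∫ y, y ∂μ)

lemma integral_abs_one_sub_div_integral_lt_two [IsProbabilityMeasure μ]
    (hnonneg : 0 ≤ᵐ[μ] fun x => x) (hint : Integrable (fun x : ℝ => x) μ)
    (hpos : 0 < ∫ x, x ∂μ) : ∫ x, |1 - x / ∫ y, y ∂μ| ∂μ < 2 := by
  set M := ∫ x, x ∂μ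
  set gap : ℝ → ℝ := fun x => 1 + x / M - |1 - x / M|
  have hint_div : Integrable (fun x => x / M) μ := hint.div_const M
  have hint_abs : Integrable (fun x => |1 - x / M|) μ := ((integrable_const 1).sub hint_div).abs
  -- `gap x = 2 min 1 (x / M)`, which vanishes only at `x = 0`
  have hgap_ne_zero : ∀ x ≠ 0, gap x ≠ 0 := by
    intro x hx
    rcases le_total (x / M) 1 with h | h
    · have : x / M ≠ 0 := div_ne_zero hx hpos.ne'
      simp only [gap, abs_of_nonneg (sub_nonneg.2 h)]
      contrapose! this
      linarith
    · simp only [gap, abs_of_nonpos (sub_nonpos.2 h)]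
      linarith
  have hgap_nonneg : 0 ≤ᵐ[μ] gap := by
    filter_upwards [hnonneg] with x hx
    have : 0 ≤ x / M := div_nonneg hx hpos.le
    simp only [gap, Pi.zero_apply, sub_nonneg]
    exact abs_le.2 ⟨by linarith, by linarith⟩
  have hgap_int : Integrable gap μ := ((integrable_const 1).add hint_div).sub hint_abs
  have hgap_pos : 0 < ∫ x, gap x ∂μ := by
    rw [integral_pos_iff_support_of_nonneg_ae hgap_nonneg hgap_int]
    exact ((integral_pos_iff_support_of_nonneg_ae hnonneg hint).1 hpos).trans_le
      (measure_mono fun x => hgap_ne_zero x)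
  have hmean_div : ∫ x, x / M ∂μ = 1 := by rw [integral_div, div_self hpos.ne']
  rw [integral_sub (by exact (integrable_const 1).add hint_div) hint_abs,
    integral_add (integrable_const 1) hint_div, hmean_div] at hgap_pos
  simp only [integral_const, probReal_univ, smul_eq_mul, mul_one] at hgap_pos
  linarith

theorem Tindex_lt_one [IsProbabilityMeasure μ] (hnonneg : μ {x : ℝ | x < 0} = 0)
    (hint : Integrable (fun x : ℝ => x) μ) (hpos : 0 < ∫ x, x ∂μ) : Tindex μ < 1 := by
  have hnonneg' : 0 ≤ᵐ[μ] fun x => x := by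
    rw [Filter.EventuallyLE, ae_iff]
    simpa only [Pi.zero_apply, not_le] using hnonneg
  have hsup := ciSup_le (norm_ft_sub_ft'_div_ft'_zero_le (μ := μ) hint)
  have hlt := integral_abs_one_sub_div_integral_lt_two hnonneg' hint hpos
  rw [Tindex]
  linarith

end FourierIndex

/-- The law of `X_ε` is `twoPoint ε (m / ε)`. -/
noncomputable def twoPoint (ε a : ℝ) : Measure ℝ :=
  ENNReal.ofReal (1 - ε) • Measure.dirac 0 + ENNReal.ofReal ε • Measure.dirac a

namespace twoPoint

variable {ε a : ℝ}

lemma integrable {E : Type*} [NormedAddCommGroup E] (f : ℝ → E) : Integrable f (twoPoint ε a) :=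
  ((integrable_dirac enorm_lt_top).smul_measure ENNReal.ofReal_ne_top).add_measure
    ((integrable_dirac enorm_lt_top).smul_measure ENNReal.ofReal_ne_top)

lemma integral_eq {E : Type*} [NormedAddCommGroup E] [NormedSpace ℝ E] [CompleteSpace E]
    (hε₀ : 0 ≤ ε) (hε₁ : ε ≤ 1) (f : ℝ → E) :
    ∫ x, f x ∂twoPoint ε a = (1 - ε) • f 0 + ε • f a := by
  rw [twoPoint, integral_add_measure
      ((integrable_dirac enorm_lt_top).smul_measure ENNReal.ofReal_ne_top)
      ((integrable_dirac enorm_lt_top).smul_measure ENNReal.ofReal_ne_top),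
    integral_smul_measure, integral_smul_measure, integral_dirac, integral_dirac,
    ENNReal.toReal_ofReal (sub_nonneg.2 hε₁), ENNReal.toReal_ofReal hε₀]

lemma isProbabilityMeasure (hε₀ : 0 ≤ ε) (hε₁ : ε ≤ 1) : IsProbabilityMeasure (twoPoint ε a) := by
  constructor
  simp only [twoPoint, Measure.add_apply, Measure.smul_apply, measure_univ, smul_eq_mul, mul_one]
  rw [← ENNReal.ofReal_add (sub_nonneg.2 hε₁) hε₀, sub_add_cancel, ENNReal.ofReal_one]

lemma measure_Iio_zero (ha : 0 ≤ a) : twoPoint ε a {x : ℝ | x < 0} = 0 := by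
  simp [twoPoint, ha.not_gt]

lemma integral_id (hε₀ : 0 ≤ ε) (hε₁ : ε ≤ 1) : ∫ x, x ∂twoPoint ε a = ε * a := by
  simp [integral_eq hε₀ hε₁]

lemma ft_sub_ft'_div_ft'_zero (hε₀ : 0 < ε) (hε₁ : ε ≤ 1) (ha : a ≠ 0) (ξ : ℝ) :
    ft (twoPoint ε a) ξ - ft' (twoPoint ε a) ξ / ft' (twoPoint ε a) 0
      = (1 - ε : ℝ) * (1 - exp (-(I * ξ * a))) := by
  have hε : (ε : ℂ) ≠ 0 := ofReal_ne_zero.2 hε₀.ne'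
  have hIa : -(I * a) ≠ 0 := neg_ne_zero.2 (mul_ne_zero I_ne_zero (ofReal_ne_zero.2 ha))
  simp only [ft, ft', integral_eq hε₀.le hε₁, real_smul, ofReal_zero, mul_zero, zero_mul, neg_zero,
    exp_zero, ofReal_sub, ofReal_one, zero_add, mul_one]
  rw [mul_div_mul_left _ _ hε, mul_div_cancel_left₀ _ hIa]
  ring

end twoPoint

lemma iSup_norm_one_sub_exp_neg_I_mul_mul {a : ℝ} (ha : a ≠ 0) :
    ⨆ ξ : ℝ, ‖1 - exp (-(I * ξ * a))‖ = 2 := by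
  have hle (ξ : ℝ) : ‖1 - exp (-(I * ξ * a))‖ ≤ 2 :=
    (norm_sub_le _ _).trans (by rw [norm_one, norm_exp_neg_I_mul_mul]; norm_num)
  refine le_antisymm (ciSup_le hle) ?_
  have hπ : exp (-(I * (Real.pi / a : ℝ) * a)) = -1 := by
    rw [ofReal_div, mul_assoc, div_mul_cancel₀ _ (ofReal_ne_zero.2 ha), exp_neg, mul_comm,
      exp_pi_mul_I]
    norm_num
  refine le_ciSup_of_le ⟨2, Set.forall_mem_range.2 hle⟩ (Real.pi / a) ?_
  rw [hπ]
  norm_num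

theorem Tindex_twoPoint {ε a : ℝ} (hε₀ : 0 < ε) (hε₁ : ε ≤ 1) (ha : a ≠ 0) :
    Tindex (twoPoint ε a) = 1 - ε := by
  simp only [Tindex, twoPoint.ft_sub_ft'_div_ft'_zero hε₀ hε₁ ha, norm_mul, norm_real,
    Real.norm_of_nonneg (sub_nonneg.2 hε₁)]
  rw [← Real.mul_iSup_of_nonneg (sub_nonneg.2 hε₁), iSup_norm_one_sub_exp_neg_I_mul_mul ha]
  ring

def tindexValues : Set ℝ :=
  {t : ℝ | ∃ μ : Measure ℝ, IsProbabilityMeasure μ ∧ μ {x : ℝ | x < 0} = 0 ∧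
    Integrable (fun x : ℝ => x) μ ∧ 0 < ∫ x, x ∂μ ∧ t = Tindex μ}

lemma lt_one_of_mem_tindexValues {t : ℝ} (ht : t ∈ tindexValues) : t < 1 := by
  obtain ⟨μ, _, hnonneg, hint, hpos, rfl⟩ := ht
  exact Tindex_lt_one hnonneg hint hpos

lemma one_sub_mem_tindexValues {ε : ℝ} (hε₀ : 0 < ε) (hε₁ : ε ≤ 1) : 1 - ε ∈ tindexValues :=
  ⟨twoPoint ε 1, twoPoint.isProbabilityMeasure hε₀.le hε₁, twoPoint.measure_Iio_zero zero_le_one,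
    twoPoint.integrable _, by rw [twoPoint.integral_id hε₀.le hε₁, mul_one]; exact hε₀,
    (Tindex_twoPoint hε₀ hε₁ one_ne_zero).symm⟩

lemma sSup_tindexValues : sSup tindexValues = 1 := by
  refine csSup_eq_of_forall_le_of_forall_lt_exists_gt ⟨_, one_sub_mem_tindexValues one_pos le_rfl⟩
    (fun t ht => (lt_one_of_mem_tindexValues ht).le) fun w hw => ?_
  obtain ⟨ε, hε₀, hε⟩ := exists_between (lt_min one_pos (sub_pos.2 hw))
  exact ⟨1 - ε, one_sub_mem_tindexValues hε₀ (hε.le.trans (min_le_left _ _)),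
    by linarith [min_le_right 1 (1 - w)]⟩

theorem stmt_8 (m ε : ℝ) (hm : 0 < m) (hε : ε ∈ Set.Ioo (0 : ℝ) 1) :
    Tindex (ENNReal.ofReal (1 - ε) • Measure.dirac (0 : ℝ)
        + ENNReal.ofReal ε • Measure.dirac (m / ε)) = 1 - ε ∧
      sSup {t : ℝ | ∃ μ : Measure ℝ, IsProbabilityMeasure μ ∧ μ {x : ℝ | x < 0} = 0 ∧
          Integrable (fun x : ℝ => x) μ ∧ 0 < ∫ x, x ∂μ ∧ t = Tindex μ} = 1 ∧
      (1 : ℝ) ∉ {t : ℝ | ∃ μ : Measure ℝ, IsProbabilityMeasure μ ∧ μ {x : ℝ | x < 0} = 0 ∧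
          Integrable (fun x : ℝ => x) μ ∧ 0 < ∫ x, x ∂μ ∧ t = Tindex μ} :=
  ⟨Tindex_twoPoint hε.1 hε.2.le (div_pos hm hε.1).ne', sSup_tindexValues,
    fun h => (lt_one_of_mem_tindexValues h).false⟩
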